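/- For every n ≥ 0 and every P ∈ D_n^{h,≥}, the number of occurrences of the factor UDD in P equals the total number of occurrences of the factors FD, UD, FUU and FUF in φ(P). -/

import Mathlib

inductive Step : Type
  | U | D | F
  deriving DecidableEq, Repr

open Step

/-- Number of occurrences of `p` as a factor (consecutive steps) of `w`. -/
def countFactor (p w : List Step) : ℕ :=
  w.tails.countP fun t => p.isPrefixOf t

/-- `w` is a Dyck path (word over {U,D} with as many U's as D's,
every prefix having at least as many U's as D's). -/
def IsDyck (w : List Step) : Prop :=
  w.count F = 0 ∧ w.count U = w.count D ∧
    ∀ p : List Step, p <+: w → p.count D ≤ p.count U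

/-- `w` is a Motzkin path. -/
def IsMotzkin (w : List Step) : Prop :=
  w.count U = w.count D ∧ ∀ p : List Step, p <+: w → p.count D ≤ p.count U

/-- The (maximal) height of a path. -/
def height (w : List Step) : ℕ :=
  (w.inits.map fun p => p.count U - p.count D).foldr max 0

/-- The set `D^{h,≥}` of Dyck paths with first return decomposition
`P = U α D β` satisfying `h(UαD) ≥ h(β)`, recursively. -/
inductive DH : List Step → Prop
  | nil : DH []
  | cons (α β : List Step) : DH α → DH β →
      height (U :: (α ++ [D])) ≥ height β → DH (U :: (α ++ [D] ++ β))

/-- The map φ from `D^{h,≥}` to Motzkin paths, as a relation: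
φ(ε)=ε, φ(αUD)=φ(α)F, φ(αUUβDγD)=φ(α)φ(γ)Uφ(β)D. -/
inductive Phi : List Step → List Step → Prop
  | nil : Phi [] []
  | flat (α a : List Step) : DH α → Phi α a →
      Phi (α ++ [U, D]) (a ++ [F])
  | up (α β γ a b c : List Step) : DH α → DH β → DH γ →
      Phi α a → Phi β b → Phi γ c →
      Phi (α ++ [U, U] ++ β ++ [D] ++ γ ++ [D]) (a ++ c ++ U :: (b ++ [D]))

/-- Auxiliary: the list starts with one or more `F`'s followed by a `D`. -/
def fThenD : List Step → Bool
  | F :: D :: _ => true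
  | F :: rest => fThenD rest
  | _ => false

/-- Auxiliary: the list starts with one or more `F`'s followed by a `U`. -/
def fThenU : List Step → Bool
  | F :: U :: _ => true
  | F :: rest => fThenU rest
  | _ => false

/-- Number of occurrences of factors of the form `U F^k D` with `k ≥ 1` in `w`. -/
def countUFD (w : List Step) : ℕ :=
  w.tails.countP fun t => match t with
    | U :: rest => fThenD rest
    | _ => false

/-- Number of occurrences of factors of the form `U F^k U` with `k ≥ 1` in `w`. -/
def countUFU (w : List Step) : ℕ :=
  w.tails.countP fun t => match t with
    | U :: rest => fThenU rest
    | _ => false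

/-!
Induct along the recursion defining `φ`. The number of occurrences of a factor in a
concatenation is the sum over the pieces plus the occurrences straddling the cut, and these
depend only on a few letters around the cut. For `φ(αUUβDγD) = φ(α)φ(γ)Uφ(β)D` the new `UDD`s
on the left are the peak `UUDD` when `β = γ = ε` and one `UDD` at the `D` following `β`
(resp. `γ`) when it ends with `UD`; on the right, one `FD` when `φ(β)` ends with `F` (that is,
`β` ends with `UD`), one `UD` when `β = ε`, and one `FUU` or `FUF` when `φ(γ)` ends with `F` and
`φ(β) ≠ ε`. The two counts agree thanks to the height condition: `α` cannot end with `UD` (the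
rest of the path, starting with `UU`, would have height at most `1`), and if `β = ε` then
`h(γ) ≤ h(UD) = 1`, so `γ` is empty or ends with `UD`.
-/

/-- Occurrences of `p` in `x ++ y` that start inside `x` but do not fit in it. -/
def crossCount (p x y : List Step) : ℕ :=
  x.tails.countP fun t => t ≠ [] ∧ p <+: t ++ y ∧ ¬ p <+: t

lemma countFactor_cons (p : List Step) (a : Step) (w : List Step) :
    countFactor p (a :: w) = countFactor p w + if p <+: a :: w then 1 else 0 := by
  simp [countFactor, List.countP_cons]

lemma exists_eq_append_of_prefix_append {α : Type*} {p t y : List α} (h : p <+: t ++ y)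
    (ht : ¬ p <+: t) : ∃ q, q ≠ [] ∧ q <+: y ∧ p = t ++ q := by
  rcases List.prefix_or_prefix_of_prefix h (List.prefix_append t y) with h' | ⟨q, rfl⟩
  · exact absurd h' ht
  · refine ⟨q, ?_, (List.prefix_append_right_inj t).1 h, rfl⟩
    rintro rfl
    exact ht (by simp)

lemma countFactor_append {p : List Step} (hp : p ≠ []) (x y : List Step) :
    countFactor p (x ++ y) = countFactor p x + countFactor p y + crossCount p x y := by
  induction x with
  | nil => simp [countFactor, crossCount, List.isPrefixOf_iff_prefix, hp]
  | cons a x ih =>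
    have hmono : p <+: a :: x → p <+: a :: x ++ y := List.prefix_append_of_prefix
    simp only [List.cons_append, countFactor_cons, ih, crossCount, List.tails_cons,
      List.countP_cons]
    by_cases h₁ : p <+: a :: x <;> by_cases h₂ : p <+: a :: (x ++ y) <;> simp_all <;> omega

/-- A straddling occurrence that starts before `s` contains `s` strictly inside it. -/
lemma crossCount_append_left {p s : List Step} (hs : ¬ s <:+: p.tail.dropLast)
    (w y : List Step) : crossCount p (w ++ s) y = crossCount p s y := by
  induction w with
  | nil => rfl
  | cons a w ih =>
    rw [List.cons_append, crossCount, List.tails_cons, List.countP_cons, ← crossCount, ih]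
    simp only [add_eq_left, ite_eq_right_iff]
    intro h
    simp only [ne_eq, reduceCtorEq, not_false_eq_true, decide_eq_true_eq, true_and] at h
    obtain ⟨q, hq, -, hp⟩ := exists_eq_append_of_prefix_append h.1 h.2
    refine absurd ?_ hs
    rw [hp, List.cons_append, List.tail_cons, List.dropLast_append_of_ne_nil hq]
    exact List.infix_append w s q.dropLast

lemma count_sub_count_le_height {p w : List Step} (h : p <+: w) :
    p.count U - p.count D ≤ height w :=
  List.le_max_of_le' 0 (List.mem_map.2 ⟨p, (List.mem_inits _ _).2 h, rfl⟩) le_rfl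

lemma two_le_height_of_prefix {w : List Step} (h : [U, U] <+: w) : 2 ≤ height w := by
  simpa using count_sub_count_le_height h

lemma IsDyck.nil : IsDyck [] := by
  refine ⟨rfl, rfl, fun p hp => ?_⟩
  simp [List.prefix_nil.1 hp]

lemma IsDyck.cons_append {A B : List Step} (hA : IsDyck A) (hB : IsDyck B) :
    IsDyck (U :: (A ++ [D] ++ B)) := by
  obtain ⟨hAF, hAbal, hApre⟩ := hA
  obtain ⟨hBF, hBbal, hBpre⟩ := hB
  refine ⟨by simp [hAF, hBF], by grind, fun p hp => ?_⟩
  rcases List.prefix_cons_iff.1 hp with rfl | ⟨t, rfl, ht⟩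
  · simp
  by_cases htA : t <+: A
  · simpa using Nat.le_succ_of_le (hApre t htA)
  obtain ⟨q, hq, hqDB, rfl⟩ := exists_eq_append_of_prefix_append (by simpa using ht) htA
  obtain ⟨r, rfl⟩ : ∃ r, q = D :: r := by
    rcases List.prefix_cons_iff.1 (by simpa using hqDB) with h | h
    · exact absurd h hq
    · exact ⟨h.choose, h.choose_spec.1⟩
  have := hBpre r (by simpa using hqDB)
  grind

lemma DH.isDyck {w : List Step} (h : DH w) : IsDyck w := by
  induction h with
  | nil => exact IsDyck.nil
  | cons _ _ _ _ _ hA hB => exact hA.cons_append hB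

lemma IsDyck.append_D_inj {A A' B B' : List Step} (hA : IsDyck A) (hA' : IsDyck A')
    (h : A ++ [D] ++ B = A' ++ [D] ++ B') : A = A' ∧ B = B' := by
  wlog hle : A.length ≤ A'.length generalizing A A' B B'
  · obtain ⟨h₁, h₂⟩ := this hA' hA h.symm (by omega)
    exact ⟨h₁.symm, h₂.symm⟩
  rcases hle.lt_or_eq with hlt | heq
  · -- a proper prefix `A ++ [D]` of `A'` would go below the axis
    have hpre : A ++ [D] <+: A' :=
      List.prefix_of_prefix_length_le ⟨B, rfl⟩ ⟨[D] ++ B', by simp [h]⟩ (by simp [hlt])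
    have := hA'.2.2 _ hpre
    simp [hA.2.1] at this
  · obtain ⟨rfl, h'⟩ := List.append_inj (by simpa using h) heq
    simpa using h'

lemma DH.of_cons {A B : List Step} (h : DH (U :: (A ++ [D] ++ B))) (hA : IsDyck A) :
    DH A ∧ DH B ∧ height B ≤ height (U :: (A ++ [D])) := by
  generalize hw : U :: (A ++ [D] ++ B) = w at h
  cases h with
  | nil => simp at hw
  | cons α β hα hβ hh =>
    obtain ⟨rfl, rfl⟩ := hα.isDyck.append_D_inj hA (List.cons_injective hw).symm
    exact ⟨hα, hβ, hh⟩

lemma height_UD : height [U, D] = 1 := by decide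

lemma DH.eq_nil_or_cons {w : List Step} (h : DH w) : w = [] ∨ ∃ v, w = U :: v := by
  cases h with
  | nil => exact .inl rfl
  | cons α β _ _ _ => exact .inr ⟨_, rfl⟩

lemma DH.eq_nil_or_concat {w : List Step} (h : DH w) :
    w = [] ∨ (∃ v, w = v ++ [U, D]) ∨ ∃ v, w = v ++ [D, D] := by
  induction h with
  | nil => exact .inl rfl
  | cons α β hα _ _ ihα ihβ =>
    rcases ihβ with rfl | ⟨v, rfl⟩ | ⟨v, rfl⟩
    · rcases ihα with rfl | ⟨v, rfl⟩ | ⟨v, rfl⟩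
      · exact .inr (.inl ⟨[], rfl⟩)
      · exact .inr (.inr ⟨U :: v ++ [U], by simp⟩)
      · exact .inr (.inr ⟨U :: v ++ [D], by simp⟩)
    · exact .inr (.inl ⟨U :: (α ++ [D] ++ v), by simp⟩)
    · exact .inr (.inr ⟨U :: (α ++ [D] ++ v), by simp⟩)

lemma DH.of_append_right {w Q : List Step} (hw : DH w) (h : DH (w ++ Q)) : DH Q := by
  induction hw with
  | nil => simpa using h
  | cons A B hA _ _ _ ihB =>
    rw [show U :: (A ++ [D] ++ B) ++ Q = U :: (A ++ [D] ++ (B ++ Q)) by simp] at h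
    exact ihB (h.of_cons hA.isDyck).2.1

lemma DH.height_le_one_of_append {w Q : List Step} (hw : DH w) (h : DH (w ++ Q))
    (hUD : [U, D] <:+ w) : height Q ≤ 1 := by
  induction hw with
  | nil => simp at hUD
  | cons A B hA hB _ _ ihB =>
    rw [show U :: (A ++ [D] ++ B) ++ Q = U :: (A ++ [D] ++ (B ++ Q)) by simp] at h
    obtain ⟨-, hBQ, hQ⟩ := h.of_cons hA.isDyck
    rcases hB.eq_nil_or_concat with rfl | ⟨v, rfl⟩ | ⟨v, rfl⟩
    · obtain rfl : A = [] := by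
        rcases hA.eq_nil_or_concat with rfl | ⟨v, rfl⟩ | ⟨v, rfl⟩ <;>
          simp_all [← List.reverse_prefix]
      simpa [height_UD] using hQ
    · exact ihB hBQ (by simp)
    · simp [← List.reverse_prefix] at hUD

lemma DH.eq_nil_or_suffix_of_height_le_one {w : List Step} (h : DH w) (hw : height w ≤ 1) :
    w = [] ∨ [U, D] <:+ w := by
  rcases h.eq_nil_or_concat with rfl | ⟨v, rfl⟩ | ⟨v, rfl⟩
  · exact .inl rfl
  · exact .inr (by simp)
  · -- the path is at height 2 just before its final `DD`
    have hbal := h.isDyck.2.1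
    have := count_sub_count_le_height (List.prefix_append v [D, D])
    grind

lemma DH.not_suffix_UD_of_append_UU {α z : List Step} (hα : DH α) (h : DH (α ++ U :: U :: z)) :
    ¬ [U, D] <:+ α := fun hUD => by
  have := hα.height_le_one_of_append h hUD
  have := two_le_height_of_prefix (w := U :: U :: z) (by simp)
  omega

lemma DH.eq_nil_or_suffix_UD_of_append_UUD {α γ : List Step} (hα : DH α) (hγ : DH γ)
    (h : DH (α ++ U :: U :: D :: (γ ++ [D]))) : γ = [] ∨ [U, D] <:+ γ := by
  have hV : DH (U :: (U :: ([] ++ [D] ++ γ) ++ [D] ++ [])) :=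
    hα.of_append_right (by simpa using h)
  have hUDγ := (hV.of_cons (IsDyck.nil.cons_append hγ.isDyck)).1
  have hγ1 := (hUDγ.of_cons IsDyck.nil).2.2
  exact hγ.eq_nil_or_suffix_of_height_le_one (by simpa [height_UD] using hγ1)

lemma DH.crossCount_UDD {x : List Step} (hx : DH x) (e : Step) (z : List Step) :
    crossCount [U, D, D] x (e :: z) = if e = D ∧ [U, D] <:+ x then 1 else 0 := by
  rcases hx.eq_nil_or_concat with rfl | ⟨v, rfl⟩ | ⟨v, rfl⟩
  · simp [crossCount]
  all_goals
    rw [crossCount_append_left (by decide)]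
    cases e <;> simp [crossCount, ← List.reverse_prefix]

lemma DH.countFactor_UDD_append_UD {α : List Step} (hα : DH α) :
    countFactor [U, D, D] (α ++ [U, D]) = countFactor [U, D, D] α := by
  rw [countFactor_append (by simp), hα.crossCount_UDD]
  simp [countFactor]

lemma DH.countFactor_UDD_append_D_cons {x : List Step} (hx : DH x) (z : List Step) :
    countFactor [U, D, D] (x ++ D :: z) =
      countFactor [U, D, D] x + countFactor [U, D, D] z + if [U, D] <:+ x then 1 else 0 := by
  rw [countFactor_append (by simp), hx.crossCount_UDD, countFactor_cons]
  simp

lemma countFactor_UDD_up {α β γ : List Step} (hα : DH α) (hβ : DH β) (hγ : DH γ) :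
    countFactor [U, D, D] (α ++ [U, U] ++ β ++ [D] ++ γ ++ [D]) =
      countFactor [U, D, D] α + countFactor [U, D, D] β + countFactor [U, D, D] γ +
        (if β = [] ∧ γ = [] then 1 else 0) + (if [U, D] <:+ β then 1 else 0) +
        (if [U, D] <:+ γ then 1 else 0) := by
  have hpeak : [U, D, D] <+: U :: (β ++ D :: (γ ++ [D])) ↔ β = [] ∧ γ = [] := by
    rcases hβ.eq_nil_or_cons with rfl | ⟨v, rfl⟩ <;>
      rcases hγ.eq_nil_or_cons with rfl | ⟨v', rfl⟩ <;> simp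
  rw [show α ++ [U, U] ++ β ++ [D] ++ γ ++ [D] = α ++ U :: U :: (β ++ D :: (γ ++ D :: [])) by
      simp,
    countFactor_append (by simp), hα.crossCount_UDD, countFactor_cons, countFactor_cons,
    hβ.countFactor_UDD_append_D_cons, hγ.countFactor_UDD_append_D_cons]
  simp +arith [hpeak, countFactor]

def motzkinStat (m : List Step) : ℕ :=
  countFactor [F, D] m + countFactor [U, D] m + countFactor [F, U, U] m + countFactor [F, U, F] m

def motzkinCross (x y : List Step) : ℕ :=
  crossCount [F, D] x y + crossCount [U, D] x y + crossCount [F, U, U] x y +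
    crossCount [F, U, F] x y

lemma motzkinStat_append (x y : List Step) :
    motzkinStat (x ++ y) = motzkinStat x + motzkinStat y + motzkinCross x y := by
  simp only [motzkinStat, motzkinCross, countFactor_append (List.cons_ne_nil _ _)]
  ring

lemma motzkinStat_U_cons (z : List Step) :
    motzkinStat (U :: z) = motzkinStat z + if [D] <+: z then 1 else 0 := by
  simp +arith [motzkinStat, countFactor_cons]

lemma motzkinCross_eq {x : List Step} (hx : x.getLast? ≠ some U) (y : List Step) :
    motzkinCross x y = if [F] <:+ x then
      (if [D] <+: y then 1 else 0) + (if [U, U] <+: y then 1 else 0) +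
        (if [U, F] <+: y then 1 else 0) else 0 := by
  rcases List.eq_nil_or_concat x with rfl | ⟨v, d, rfl⟩
  · simp [motzkinCross, crossCount]
  cases d <;> simp (disch := decide) only [motzkinCross, List.concat_eq_append,
    crossCount_append_left] <;> simp_all [crossCount, List.countP_cons]

lemma motzkinStat_append_F {a : List Step} (ha : a.getLast? ≠ some U) :
    motzkinStat (a ++ [F]) = motzkinStat a := by
  rw [motzkinStat_append, motzkinCross_eq ha]
  simp [motzkinStat, countFactor]

lemma motzkinStat_up {a b c : List Step} (ha : ¬ [F] <:+ a) (ha' : a.getLast? ≠ some U)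
    (hb : b.head? ≠ some D) (hb' : b.getLast? ≠ some U) (hc : c.getLast? ≠ some U) :
    motzkinStat (a ++ c ++ U :: (b ++ [D])) =
      motzkinStat a + motzkinStat b + motzkinStat c + (if [F] <:+ b then 1 else 0) +
        (if b = [] then 1 else 0) + (if [F] <:+ c ∧ b ≠ [] then 1 else 0) := by
  rw [List.append_assoc, motzkinStat_append, motzkinStat_append c, motzkinStat_U_cons,
    motzkinStat_append b, motzkinCross_eq ha', motzkinCross_eq hc, motzkinCross_eq hb']
  have hD : motzkinStat [D] = 0 := by decide
  rcases b with _ | ⟨e, b⟩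
  · simp +arith [ha, hD]
  · cases e <;> simp_all +arith

lemma Phi.eq_nil_iff {P m : List Step} (h : Phi P m) : P = [] ↔ m = [] := by
  cases h <;> simp

lemma Phi.getLast?_ne_U {P m : List Step} (h : Phi P m) : m.getLast? ≠ some U := by
  cases h <;> simp [List.getLast?_cons]

lemma Phi.head?_ne_D {P m : List Step} (h : Phi P m) : m.head? ≠ some D := by
  induction h with
  | nil => simp
  | flat _ a => cases a <;> simp_all
  | up _ _ _ a _ c => cases a <;> cases c <;> simp_all

lemma Phi.suffix_UD_iff {P m : List Step} (h : Phi P m) : [U, D] <:+ P ↔ [F] <:+ m := by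
  cases h with
  | nil => simp
  | flat => simp
  | up _ _ _ _ _ _ _ _ hγ =>
    rcases hγ.eq_nil_or_concat with rfl | ⟨v, rfl⟩ | ⟨v, rfl⟩ <;>
      simp [← List.reverse_prefix]

theorem Phi.countFactor_UDD_eq_motzkinStat {P m : List Step} (hphi : Phi P m) (hP : DH P) :
    countFactor [U, D, D] P = motzkinStat m := by
  induction hphi with
  | nil => rfl
  | flat α a hα ha ih =>
    rw [hα.countFactor_UDD_append_UD, motzkinStat_append_F ha.getLast?_ne_U, ih hα]
  | up α β γ a b c hα hβ hγ pa pb pc iha ihb ihc =>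
    have hαUD : ¬ [U, D] <:+ α := hα.not_suffix_UD_of_append_UU (by simpa using hP)
    have hβnil : β = [] → γ = [] ∨ [U, D] <:+ γ := by
      rintro rfl
      exact hα.eq_nil_or_suffix_UD_of_append_UUD hγ (by simpa using hP)
    rw [countFactor_UDD_up hα hβ hγ, iha hα, ihb hβ, ihc hγ,
      motzkinStat_up (pa.suffix_UD_iff.not.1 hαUD) pa.getLast?_ne_U pb.head?_ne_D
        pb.getLast?_ne_U pc.getLast?_ne_U]
    simp only [pb.suffix_UD_iff, pc.suffix_UD_iff, pb.eq_nil_iff, pc.eq_nil_iff] at hβnil ⊢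
    by_cases hb : b = []
    · rcases hβnil hb with rfl | hF
      · simp [hb]
      · simp [hb, hF, hF.ne_nil (List.cons_ne_nil _ _)]
    · simp [hb]

theorem stmt17_general (P m : List Step) (hP : DH P)
    (hphi : Phi P m) :
    countFactor [Step.U, Step.D, Step.D] P =
      countFactor [Step.F, Step.D] m + countFactor [Step.U, Step.D] m +
        countFactor [Step.F, Step.U, Step.U] m +
        countFactor [Step.F, Step.U, Step.F] m :=
  hphi.countFactor_UDD_eq_motzkinStat hP

/-- φ transports UDD: #UDD(P) = #FD(φP) + #UD(φP) + #FUU(φP) + #FUF(φP). -/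
theorem stmt17 (n : ℕ) (P m : List Step) (hP : DH P) (hlen : P.length = 2 * n)
    (hphi : Phi P m) :
    countFactor [Step.U, Step.D, Step.D] P =
      countFactor [Step.F, Step.D] m + countFactor [Step.U, Step.D] m +
        countFactor [Step.F, Step.U, Step.U] m +
        countFactor [Step.F, Step.U, Step.F] m :=
  stmt17_general P m hP hphi
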